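/- arXiv:2304.06758 — 2 statements merged into one kernel-verified Lean document; each statement's English description precedes it below -/
import Mathlib

section
/- Let m ≥ 1, let M, N ⊆ [m] with |M|+|N| ≥ 1 and not both M = [m] and N = [m], and let D^c = E^m ∖ (aΔ_M + cΔ_N), indexed by (F₂^m×F₂^m) ∖ (Δ_M×Δ_N). Then the linear right-E-code C^R_{D^c} has length |D^c| = 2^{2m}−2^{|M|+|N|} and size 2^m, and the multiset {wt_Lee(c^R_{D^c}(v)) : v ∈ E^m} (with multiplicity over all 2^{2m} elements v ∈ E^m) consists of: 2^{2m} with multiplicity 2^m(2^{m−|M∪N|}−1); 2^{2m}−2^{|M|+|N|−1} with multiplicity 2^m(2^{m−|N|}−2^{m−|M∪N|}); 2^{2m}−2^{|M|+|N|} with multiplicity 2^m(2^m−2^{m−|N|}); and 0 with multiplicity 2^m. -/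
open Finset

/-- The simplicial complex `Δ_M ⊆ 𝔽₂^m` generated by `M ⊆ [m]`:
all vectors whose support is contained in `M`. -/
def deltaC {m : ℕ} (M : Finset (Fin m)) : Finset (Fin m → ZMod 2) :=
  Finset.univ.filter (fun w => ∀ i, w i ≠ 0 → i ∈ M)

/-- Dot product over `𝔽₂`. -/
def dotp {m : ℕ} (x y : Fin m → ZMod 2) : ZMod 2 := ∑ i, x i * y i

/-- The Gray map on a single element `a·s + c·t ↔ (s, t)` of `E = 𝔽₂ × 𝔽₂`:
`Φ(as + ct) = (t, s + t)`. -/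
def grayPair (e : ZMod 2 × ZMod 2) : Fin 2 → ZMod 2 := ![e.2, e.1 + e.2]

/-- The left codeword `c^L_D(v)` for `v = aα + cβ ↔ (α, β)`:
its coordinate at `d = (t₁, t₂) ∈ D` is `a(α·t₁) + c(β·t₁) ↔ (α·t₁, β·t₁)`. -/
def cwL {m : ℕ} (Ds : Finset ((Fin m → ZMod 2) × (Fin m → ZMod 2)))
    (v : (Fin m → ZMod 2) × (Fin m → ZMod 2)) :
    {d // d ∈ Ds} → ZMod 2 × ZMod 2 :=
  fun d => (dotp v.1 d.1.1, dotp v.2 d.1.1)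

/-- The Gray image `Φ(c^L_D(v)) ∈ 𝔽₂^{2|D|}` of the left codeword `c^L_D(v)`;
its Hamming weight (`hammingNorm`) is the Lee weight of `c^L_D(v)`. -/
def gcwL {m : ℕ} (Ds : Finset ((Fin m → ZMod 2) × (Fin m → ZMod 2)))
    (v : (Fin m → ZMod 2) × (Fin m → ZMod 2)) :
    {d // d ∈ Ds} × Fin 2 → ZMod 2 :=
  fun x => grayPair (cwL Ds v x.1) x.2

/-- The right codeword `c^R_D(v)` for `v = aα + cβ ↔ (α, β)`:
its coordinate at `d = (t₁, t₂) ∈ D` is `a(t₁·α) + c(t₂·α) ↔ (t₁·α, t₂·α)`. -/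
def cwR {m : ℕ} (Ds : Finset ((Fin m → ZMod 2) × (Fin m → ZMod 2)))
    (v : (Fin m → ZMod 2) × (Fin m → ZMod 2)) :
    {d // d ∈ Ds} → ZMod 2 × ZMod 2 :=
  fun d => (dotp d.1.1 v.1, dotp d.1.2 v.1)

/-- The Gray image `Φ(c^R_D(v)) ∈ 𝔽₂^{2|D|}` of the right codeword `c^R_D(v)`;
its Hamming weight (`hammingNorm`) is the Lee weight of `c^R_D(v)`. -/
def gcwR {m : ℕ} (Ds : Finset ((Fin m → ZMod 2) × (Fin m → ZMod 2)))
    (v : (Fin m → ZMod 2) × (Fin m → ZMod 2)) :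
    {d // d ∈ Ds} × Fin 2 → ZMod 2 :=
  fun x => grayPair (cwR Ds v x.1) x.2


lemma zmod2_add_self : ∀ x : ZMod 2, x + x = 0 := by decide
lemma zmod2_ne0 : ∀ x : ZMod 2, x ≠ 0 → x = 1 := by decide

lemma dotp_add_left {m : ℕ} (x y α : Fin m → ZMod 2) :
    dotp (x + y) α = dotp x α + dotp y α := by
  simp [dotp, add_mul, Finset.sum_add_distrib]

lemma dotp_single_left {m : ℕ} (i : Fin m) (α : Fin m → ZMod 2) :
    dotp (Pi.single i 1) α = α i := by
  rw [dotp, Finset.sum_eq_single i]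
  · simp
  · intro j _ hj; simp [Pi.single_eq_of_ne hj]
  · simp

lemma dotp_zero_of_disj {m : ℕ} {S : Finset (Fin m)} {t α : Fin m → ZMod 2}
    (ht : ∀ i, t i ≠ 0 → i ∈ S) (hα : ∀ i ∈ S, α i = 0) : dotp t α = 0 := by
  rw [dotp]
  apply Finset.sum_eq_zero
  intro i _
  by_cases h : t i = 0
  · simp [h]
  · simp [hα i (ht i h)]

lemma dotp_zero_right {m : ℕ} (t : Fin m → ZMod 2) : dotp t 0 = 0 := by
  simp [dotp]

lemma deltaC_card {m : ℕ} (M : Finset (Fin m)) : (deltaC M).card = 2 ^ M.card := by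
  classical
  have h2 : (2:ℕ) ^ M.card = Fintype.card ({i // i ∈ M} → ZMod 2) := by
    simp [Fintype.card_fun]
  rw [h2, ← Finset.card_univ]
  refine Finset.card_bij' (fun w _ => fun i : {i // i ∈ M} => w i.1)
    (fun f _ => fun i => if h : i ∈ M then f ⟨i, h⟩ else 0) ?_ ?_ ?_ ?_
  · intro w hw; exact Finset.mem_univ _
  · intro f _
    simp only [deltaC, Finset.mem_filter]
    refine ⟨Finset.mem_univ _, fun i hi => ?_⟩
    by_contra h
    simp [h] at hi
  · intro w hw
    simp only [deltaC, Finset.mem_filter] at hw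
    funext i
    by_cases h : i ∈ M
    · simp [h]
    · simp only [h, dif_neg, not_false_iff]
      by_contra hc
      exact h (hw.2 i (Ne.symm hc))
  · intro f _
    funext i
    simp [i.2]

lemma half_card {ι : Type*} [DecidableEq ι] (S : Finset ι) (f : ι → ZMod 2)
    [DecidablePred fun x => f x ≠ 0]
    (g : ι → ι) (hg2 : ∀ x, g (g x) = x) (hgS : ∀ x ∈ S, g x ∈ S)
    (hf : ∀ x, f (g x) = f x + 1) :
    2 * (S.filter (fun x => f x ≠ 0)).card = S.card := by
  classical
  have key : (S.filter (fun x => f x ≠ 0)).card = (S.filter (fun x => ¬ f x ≠ 0)).card := by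
    apply Finset.card_bij (fun x _ => g x)
    · intro a ha
      simp only [Finset.mem_filter, not_not] at ha ⊢
      refine ⟨hgS a ha.1, ?_⟩
      rw [hf a, zmod2_ne0 _ ha.2]
      decide
    · intro a ha b hb hab
      have := congrArg g hab
      rwa [hg2, hg2] at this
    · intro b hb
      simp only [Finset.mem_filter, not_not] at hb
      refine ⟨g b, ?_, (hg2 b)⟩
      simp only [Finset.mem_filter]
      refine ⟨hgS b hb.1, ?_⟩
      rw [hf b, hb.2]
      decide
  have := Finset.card_filter_add_card_filter_not (s := S) (p := fun x => f x ≠ 0)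
  omega

lemma add_single_invol {m : ℕ} (t : Fin m → ZMod 2) (i : Fin m) :
    t + Pi.single i 1 + Pi.single i 1 = t := by
  funext j
  simp [add_assoc, zmod2_add_self]

lemma deltaC_add_single {m : ℕ} {N : Finset (Fin m)} {i : Fin m} (hi : i ∈ N)
    {t : Fin m → ZMod 2} (ht : t ∈ deltaC N) : t + Pi.single i 1 ∈ deltaC N := by
  simp only [deltaC, Finset.mem_filter] at ht ⊢
  refine ⟨Finset.mem_univ _, fun j hj => ?_⟩
  by_cases h : j = i
  · exact h ▸ hi
  · apply ht.2 j
    simpa [Pi.single_eq_of_ne h] using hj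

lemma deltaC_univ {m : ℕ} : deltaC (Finset.univ : Finset (Fin m)) = Finset.univ := by
  simp [deltaC]

lemma prod_card {m : ℕ} (M N : Finset (Fin m)) :
    (deltaC M ×ˢ deltaC N).card = 2 ^ (M.card + N.card) := by
  rw [Finset.card_product, deltaC_card, deltaC_card, pow_add]

lemma count1 {m : ℕ} (M N : Finset (Fin m)) (α : Fin m → ZMod 2) {i : Fin m}
    (hi : i ∈ N) (hαi : α i ≠ 0) :
    2 * ((deltaC M ×ˢ deltaC N).filter (fun d => dotp d.2 α ≠ 0)).card
      = 2 ^ (M.card + N.card) := by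
  classical
  rw [← prod_card M N]
  apply half_card _ _ (fun d => (d.1, d.2 + Pi.single i 1))
  · intro x; simp [add_single_invol]
  · intro x hx
    simp only [Finset.mem_product] at hx ⊢
    exact ⟨hx.1, deltaC_add_single hi hx.2⟩
  · intro x
    simp only
    rw [dotp_add_left, dotp_single_left, zmod2_ne0 _ hαi]

lemma count2M {m : ℕ} (M N : Finset (Fin m)) (α : Fin m → ZMod 2) {i : Fin m}
    (hi : i ∈ M) (hαi : α i ≠ 0) :
    2 * ((deltaC M ×ˢ deltaC N).filter (fun d => dotp d.1 α + dotp d.2 α ≠ 0)).card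
      = 2 ^ (M.card + N.card) := by
  classical
  rw [← prod_card M N]
  apply half_card _ _ (fun d => (d.1 + Pi.single i 1, d.2))
  · intro x; simp [add_single_invol]
  · intro x hx
    simp only [Finset.mem_product] at hx ⊢
    exact ⟨deltaC_add_single hi hx.1, hx.2⟩
  · intro x
    simp only
    rw [dotp_add_left, dotp_single_left, zmod2_ne0 _ hαi, add_right_comm]

lemma count2N {m : ℕ} (M N : Finset (Fin m)) (α : Fin m → ZMod 2) {i : Fin m}
    (hi : i ∈ N) (hαi : α i ≠ 0) :
    2 * ((deltaC M ×ˢ deltaC N).filter (fun d => dotp d.1 α + dotp d.2 α ≠ 0)).card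
      = 2 ^ (M.card + N.card) := by
  classical
  rw [← prod_card M N]
  apply half_card _ _ (fun d => (d.1, d.2 + Pi.single i 1))
  · intro x; simp [add_single_invol]
  · intro x hx
    simp only [Finset.mem_product] at hx ⊢
    exact ⟨hx.1, deltaC_add_single hi hx.2⟩
  · intro x
    simp only
    rw [dotp_add_left, dotp_single_left, zmod2_ne0 _ hαi, ← add_assoc]

lemma norm_formula {m : ℕ} (Ds : Finset ((Fin m → ZMod 2) × (Fin m → ZMod 2)))
    (v : (Fin m → ZMod 2) × (Fin m → ZMod 2)) :
    hammingNorm (gcwR Ds v) =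
      (Ds.filter (fun d => dotp d.2 v.1 ≠ 0)).card
      + (Ds.filter (fun d => dotp d.1 v.1 + dotp d.2 v.1 ≠ 0)).card := by
  classical
  rw [hammingNorm]
  rw [show ({i | gcwR Ds v i ≠ 0} : Finset _) = Finset.univ.filter (fun i => gcwR Ds v i ≠ 0) from rfl]
  rw [Finset.card_filter]
  rw [← Finset.univ_product_univ, Finset.sum_product]
  have step : ∀ d : {d // d ∈ Ds},
      (∑ j : Fin 2, if gcwR Ds v (d, j) ≠ 0 then 1 else 0)
        = ((if dotp d.1.2 v.1 ≠ 0 then 1 else 0)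
          + (if dotp d.1.1 v.1 + dotp d.1.2 v.1 ≠ 0 then 1 else 0) : ℕ) := by
    intro d
    rw [Fin.sum_univ_two]
    rfl
  rw [Finset.sum_congr rfl (fun d _ => step d)]
  rw [Finset.sum_add_distrib]
  congr 1
  · rw [Finset.card_filter, ← Finset.sum_coe_sort Ds]
  · rw [Finset.card_filter, ← Finset.sum_coe_sort Ds]

lemma filter_compl_add {ι : Type*} [Fintype ι] [DecidableEq ι] (D : Finset ι)
    (p : ι → Prop) [DecidablePred p] :
    (D.filter p).card + (Dᶜ.filter p).card = (Finset.univ.filter p).card := by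
  rw [← Finset.card_union_of_disjoint (Finset.disjoint_filter_filter disjoint_compl_right),
    ← Finset.filter_union, Finset.union_compl]

lemma univ_pairs_card {m : ℕ} :
    (Finset.univ : Finset ((Fin m → ZMod 2) × (Fin m → ZMod 2))).card = 2 ^ (2 * m) := by
  rw [Finset.card_univ]
  simp [two_mul, pow_add]

lemma count1_univ {m : ℕ} (α : Fin m → ZMod 2) {i : Fin m} (hαi : α i ≠ 0) :
    2 * ((Finset.univ : Finset ((Fin m → ZMod 2) × (Fin m → ZMod 2))).filter
      (fun d => dotp d.2 α ≠ 0)).card = 2 ^ (2 * m) := by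
  have := count1 (Finset.univ : Finset (Fin m)) Finset.univ α (Finset.mem_univ i) hαi
  rwa [deltaC_univ, Finset.univ_product_univ, Finset.card_univ, Fintype.card_fin,
    ← two_mul] at this

lemma count2_univ {m : ℕ} (α : Fin m → ZMod 2) {i : Fin m} (hαi : α i ≠ 0) :
    2 * ((Finset.univ : Finset ((Fin m → ZMod 2) × (Fin m → ZMod 2))).filter
      (fun d => dotp d.1 α + dotp d.2 α ≠ 0)).card = 2 ^ (2 * m) := by
  have := count2N (Finset.univ : Finset (Fin m)) Finset.univ α (Finset.mem_univ i) hαi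
  rwa [deltaC_univ, Finset.univ_product_univ, Finset.card_univ, Fintype.card_fin,
    ← two_mul] at this

lemma mem_deltaC {m : ℕ} {S : Finset (Fin m)} {t : Fin m → ZMod 2} :
    t ∈ deltaC S ↔ ∀ i, t i ≠ 0 → i ∈ S := by simp [deltaC]

lemma wt3 {m : ℕ} (M N : Finset (Fin m))
    (v : (Fin m → ZMod 2) × (Fin m → ZMod 2)) {i : Fin m}
    (hi : i ∈ N) (hαi : v.1 i ≠ 0) :
    hammingNorm (gcwR ((deltaC M ×ˢ deltaC N)ᶜ) v)
      = 2 ^ (2 * m) - 2 ^ (M.card + N.card) := by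
  classical
  rw [norm_formula]
  have h1 := filter_compl_add (deltaC M ×ˢ deltaC N) (fun d => dotp d.2 v.1 ≠ 0)
  have h2 := filter_compl_add (deltaC M ×ˢ deltaC N)
    (fun d => dotp d.1 v.1 + dotp d.2 v.1 ≠ 0)
  have u1 := count1_univ v.1 hαi
  have u2 := count2_univ v.1 hαi
  have d1 := count1 M N v.1 hi hαi
  have d2 := count2N M N v.1 hi hαi
  omega

lemma wt2 {m : ℕ} (M N : Finset (Fin m)) (hMN : 1 ≤ M.card + N.card)
    (v : (Fin m → ZMod 2) × (Fin m → ZMod 2)) {i : Fin m}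
    (hcN : ∀ j ∈ N, v.1 j = 0) (hi : i ∈ M) (hαi : v.1 i ≠ 0) :
    hammingNorm (gcwR ((deltaC M ×ˢ deltaC N)ᶜ) v)
      = 2 ^ (2 * m) - 2 ^ (M.card + N.card - 1) := by
  classical
  rw [norm_formula]
  have h1 := filter_compl_add (deltaC M ×ˢ deltaC N) (fun d => dotp d.2 v.1 ≠ 0)
  have h2 := filter_compl_add (deltaC M ×ˢ deltaC N)
    (fun d => dotp d.1 v.1 + dotp d.2 v.1 ≠ 0)
  have u1 := count1_univ v.1 hαi
  have u2 := count2_univ v.1 hαi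
  have d1 : ((deltaC M ×ˢ deltaC N).filter (fun d => dotp d.2 v.1 ≠ 0)).card = 0 := by
    rw [Finset.card_eq_zero, Finset.filter_eq_empty_iff]
    intro d hd
    rw [not_ne_iff]
    exact dotp_zero_of_disj (mem_deltaC.mp (Finset.mem_product.mp hd).2) hcN
  have d2 := count2M M N v.1 hi hαi
  have hp : 2 ^ (M.card + N.card) = 2 * 2 ^ (M.card + N.card - 1) := by
    rw [← pow_succ']
    congr 1
    omega
  omega

lemma wt1 {m : ℕ} (M N : Finset (Fin m))
    (v : (Fin m → ZMod 2) × (Fin m → ZMod 2)) {i : Fin m}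
    (hcU : ∀ j ∈ M ∪ N, v.1 j = 0) (hαi : v.1 i ≠ 0) :
    hammingNorm (gcwR ((deltaC M ×ˢ deltaC N)ᶜ) v) = 2 ^ (2 * m) := by
  classical
  rw [norm_formula]
  have h1 := filter_compl_add (deltaC M ×ˢ deltaC N) (fun d => dotp d.2 v.1 ≠ 0)
  have h2 := filter_compl_add (deltaC M ×ˢ deltaC N)
    (fun d => dotp d.1 v.1 + dotp d.2 v.1 ≠ 0)
  have u1 := count1_univ v.1 hαi
  have u2 := count2_univ v.1 hαi
  have hM0 : ∀ j ∈ M, v.1 j = 0 := fun j hj => hcU j (Finset.mem_union_left _ hj)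
  have hN0 : ∀ j ∈ N, v.1 j = 0 := fun j hj => hcU j (Finset.mem_union_right _ hj)
  have d1 : ((deltaC M ×ˢ deltaC N).filter (fun d => dotp d.2 v.1 ≠ 0)).card = 0 := by
    rw [Finset.card_eq_zero, Finset.filter_eq_empty_iff]
    intro d hd
    rw [not_ne_iff]
    exact dotp_zero_of_disj (mem_deltaC.mp (Finset.mem_product.mp hd).2) hN0
  have d2 : ((deltaC M ×ˢ deltaC N).filter
      (fun d => dotp d.1 v.1 + dotp d.2 v.1 ≠ 0)).card = 0 := by
    rw [Finset.card_eq_zero, Finset.filter_eq_empty_iff]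
    intro d hd
    rw [not_ne_iff]
    rw [dotp_zero_of_disj (mem_deltaC.mp (Finset.mem_product.mp hd).1) hM0,
      dotp_zero_of_disj (mem_deltaC.mp (Finset.mem_product.mp hd).2) hN0, add_zero]
  omega

lemma wt0 {m : ℕ} (Ds : Finset ((Fin m → ZMod 2) × (Fin m → ZMod 2)))
    (v : (Fin m → ZMod 2) × (Fin m → ZMod 2)) (hα : v.1 = 0) :
    hammingNorm (gcwR Ds v) = 0 := by
  classical
  rw [norm_formula]
  have e1 : (Ds.filter (fun d => dotp d.2 v.1 ≠ 0)).card = 0 := by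
    rw [Finset.card_eq_zero, Finset.filter_eq_empty_iff]
    intro d _
    rw [not_ne_iff, hα, dotp_zero_right]
  have e2 : (Ds.filter (fun d => dotp d.1 v.1 + dotp d.2 v.1 ≠ 0)).card = 0 := by
    rw [Finset.card_eq_zero, Finset.filter_eq_empty_iff]
    intro d _
    rw [not_ne_iff, hα, dotp_zero_right, dotp_zero_right, add_zero]
  omega

lemma card_vanish {m : ℕ} (S : Finset (Fin m)) :
    ((Finset.univ : Finset (Fin m → ZMod 2)).filter (fun α => ∀ i ∈ S, α i = 0)).card
      = 2 ^ (m - S.card) := by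
  classical
  have he : (Finset.univ : Finset (Fin m → ZMod 2)).filter (fun α => ∀ i ∈ S, α i = 0)
      = deltaC Sᶜ := by
    ext α
    simp only [Finset.mem_filter, Finset.mem_univ, true_and, mem_deltaC, Finset.mem_compl]
    constructor
    · intro h i hne hi
      exact hne (h i hi)
    · intro h i hi
      by_contra hne
      exact h i hne hi
  rw [he, deltaC_card, Finset.card_compl, Fintype.card_fin]

lemma exists_t {m : ℕ} (α α' : Fin m → ZMod 2) {i j : Fin m} (hi : α i ≠ α' i) :
    ∃ t : Fin m → ZMod 2, dotp t α ≠ dotp t α' ∧ t j ≠ 0 ∧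
      ∀ k, t k ≠ 0 → k = i ∨ k = j := by
  by_cases h : α j = α' j
  · have hij : i ≠ j := fun he => hi (he ▸ h)
    refine ⟨Pi.single i 1 + Pi.single j 1, ?_, ?_, ?_⟩
    · rw [dotp_add_left, dotp_add_left, dotp_single_left, dotp_single_left,
        dotp_single_left, dotp_single_left, h]
      intro hc
      exact hi (add_right_cancel hc)
    · simp [Pi.single_eq_of_ne (Ne.symm hij)]
    · intro k hk
      by_contra hc
      push_neg at hc
      simp [Pi.single_eq_of_ne hc.1, Pi.single_eq_of_ne hc.2] at hk
  · refine ⟨Pi.single j 1, ?_, ?_, ?_⟩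
    · rw [dotp_single_left, dotp_single_left]; exact h
    · simp
    · intro k hk
      by_contra hc
      push_neg at hc
      simp [Pi.single_eq_of_ne hc.2] at hk

lemma cwR_inj {m : ℕ} (M N : Finset (Fin m)) (hMNu : ¬ (M = Finset.univ ∧ N = Finset.univ))
    (Ds : Finset ((Fin m → ZMod 2) × (Fin m → ZMod 2)))
    (hDs : Ds = (deltaC M ×ˢ deltaC N)ᶜ) :
    Function.Injective (fun α : Fin m → ZMod 2 => cwR Ds (α, 0)) := by
  classical
  intro α α' h
  by_contra hne
  have hex : ∃ i, α i ≠ α' i := by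
    by_contra hc
    push_neg at hc
    exact hne (funext hc)
  obtain ⟨i, hi⟩ := hex
  rw [not_and_or] at hMNu
  have key : ∀ d ∈ Ds, dotp d.1 α = dotp d.1 α' ∧ dotp d.2 α = dotp d.2 α' := by
    intro d hd
    have := congrFun h ⟨d, hd⟩
    exact ⟨congrArg Prod.fst this, congrArg Prod.snd this⟩
  rcases hMNu with hM | hN
  · have hj : ∃ j, j ∉ M := by
      by_contra hc
      push_neg at hc
      exact hM (Finset.eq_univ_iff_forall.mpr hc)
    obtain ⟨j, hj⟩ := hj
    obtain ⟨t, ht, htj, _⟩ := exists_t α α' (j := j) hi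
    have hdmem : (t, (0 : Fin m → ZMod 2)) ∈ Ds := by
      rw [hDs, Finset.mem_compl, Finset.mem_product]
      intro hc
      exact hj (mem_deltaC.mp hc.1 j htj)
    exact ht (key _ hdmem).1
  · have hj : ∃ j, j ∉ N := by
      by_contra hc
      push_neg at hc
      exact hN (Finset.eq_univ_iff_forall.mpr hc)
    obtain ⟨j, hj⟩ := hj
    obtain ⟨t, ht, htj, _⟩ := exists_t α α' (j := j) hi
    have hdmem : ((0 : Fin m → ZMod 2), t) ∈ Ds := by
      rw [hDs, Finset.mem_compl, Finset.mem_product]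
      intro hc
      exact hj (mem_deltaC.mp hc.2 j htj)
    exact ht (key _ hdmem).2

lemma map_filter_const {ι : Type*} (s : Multiset ι) (p : ι → Prop) [DecidablePred p]
    (f : ι → ℕ) (c : ℕ) (h : ∀ x ∈ s, p x → f x = c) :
    (s.filter p).map f = Multiset.replicate (s.filter p).card c := by
  rw [show (s.filter p).map f = (s.filter p).map (fun _ => c) from
    Multiset.map_congr rfl (fun x hx =>
      h x (Multiset.mem_of_mem_filter hx) (Multiset.of_mem_filter hx)),
    Multiset.map_const']

lemma card_fst_filter {m : ℕ} (P : (Fin m → ZMod 2) → Prop) [DecidablePred P] :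
    ((Finset.univ : Finset ((Fin m → ZMod 2) × (Fin m → ZMod 2))).filter
      (fun v => P v.1)).card
      = ((Finset.univ : Finset (Fin m → ZMod 2)).filter P).card * 2 ^ m := by
  classical
  have he : ((Finset.univ : Finset ((Fin m → ZMod 2) × (Fin m → ZMod 2))).filter
      (fun v => P v.1))
      = ((Finset.univ : Finset (Fin m → ZMod 2)).filter P) ×ˢ Finset.univ := by
    ext x
    simp [Finset.mem_product]
  rw [he, Finset.card_product, Finset.card_univ]
  simp

lemma mfilter_card {ι : Type*} [Fintype ι] (p : ι → Prop) [DecidablePred p] :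
    (Multiset.filter p (Finset.univ : Finset ι).val).card
      = ((Finset.univ : Finset ι).filter p).card := rfl

lemma acount0 {m : ℕ} :
    ((Finset.univ : Finset (Fin m → ZMod 2)).filter (fun α => α = 0)).card = 1 := by
  rw [Finset.filter_eq', if_pos (Finset.mem_univ _), Finset.card_singleton]

lemma acount3 {m : ℕ} (N : Finset (Fin m)) :
    ((Finset.univ : Finset (Fin m → ZMod 2)).filter
      (fun α => ¬ ∀ i ∈ N, α i = 0)).card = 2 ^ m - 2 ^ (m - N.card) := by
  classical
  have h := Finset.card_filter_add_card_filter_not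
    (s := (Finset.univ : Finset (Fin m → ZMod 2))) (p := fun α => ∀ i ∈ N, α i = 0)
  rw [card_vanish, Finset.card_univ] at h
  simp only [Fintype.card_fun, Fintype.card_fin, ZMod.card] at h
  exact eq_tsub_of_add_eq ((add_comm _ _).trans h)

lemma acount2 {m : ℕ} (M N : Finset (Fin m)) :
    ((Finset.univ : Finset (Fin m → ZMod 2)).filter
      (fun α => (¬ ∀ i ∈ M ∪ N, α i = 0) ∧ ∀ i ∈ N, α i = 0)).card
      = 2 ^ (m - N.card) - 2 ^ (m - (M ∪ N).card) := by
  classical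
  have h := Finset.card_filter_add_card_filter_not
    (s := (Finset.univ : Finset (Fin m → ZMod 2)).filter (fun α => ∀ i ∈ N, α i = 0))
    (p := fun α => ∀ i ∈ M ∪ N, α i = 0)
  rw [Finset.filter_filter, Finset.filter_filter, card_vanish] at h
  have e1 : ((Finset.univ : Finset (Fin m → ZMod 2)).filter
      (fun α => (∀ i ∈ N, α i = 0) ∧ ∀ i ∈ M ∪ N, α i = 0))
      = ((Finset.univ : Finset (Fin m → ZMod 2)).filter
      (fun α => ∀ i ∈ M ∪ N, α i = 0)) := by
    apply Finset.filter_congr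
    intro α _
    constructor
    · exact fun h => h.2
    · exact fun h => ⟨fun i hi => h i (Finset.mem_union_right _ hi), h⟩
  have e2 : ((Finset.univ : Finset (Fin m → ZMod 2)).filter
      (fun α => (¬ ∀ i ∈ M ∪ N, α i = 0) ∧ ∀ i ∈ N, α i = 0))
      = ((Finset.univ : Finset (Fin m → ZMod 2)).filter
      (fun α => (∀ i ∈ N, α i = 0) ∧ ¬ ∀ i ∈ M ∪ N, α i = 0)) := by
    apply Finset.filter_congr
    intro α _
    exact and_comm
  rw [e1, card_vanish] at h
  rw [e2]
  exact eq_tsub_of_add_eq ((add_comm _ _).trans h)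

lemma acount1 {m : ℕ} (M N : Finset (Fin m)) :
    ((Finset.univ : Finset (Fin m → ZMod 2)).filter
      (fun α => (¬ α = 0) ∧ ∀ i ∈ M ∪ N, α i = 0)).card
      = 2 ^ (m - (M ∪ N).card) - 1 := by
  classical
  have h := Finset.card_filter_add_card_filter_not
    (s := (Finset.univ : Finset (Fin m → ZMod 2)).filter (fun α => ∀ i ∈ M ∪ N, α i = 0))
    (p := fun α => α = 0)
  rw [Finset.filter_filter, Finset.filter_filter, card_vanish] at h
  have e1 : ((Finset.univ : Finset (Fin m → ZMod 2)).filter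
      (fun α => (∀ i ∈ M ∪ N, α i = 0) ∧ α = 0))
      = ((Finset.univ : Finset (Fin m → ZMod 2)).filter (fun α => α = 0)) := by
    apply Finset.filter_congr
    intro α _
    constructor
    · exact fun h => h.2
    · intro h; subst h; exact ⟨fun i _ => rfl, rfl⟩
  have e2 : ((Finset.univ : Finset (Fin m → ZMod 2)).filter
      (fun α => (¬ α = 0) ∧ ∀ i ∈ M ∪ N, α i = 0))
      = ((Finset.univ : Finset (Fin m → ZMod 2)).filter
      (fun α => (∀ i ∈ M ∪ N, α i = 0) ∧ ¬ α = 0)) := by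
    apply Finset.filter_congr
    intro α _
    exact and_comm
  rw [e1, acount0] at h
  rw [e2]
  exact eq_tsub_of_add_eq ((add_comm _ _).trans h)


theorem stmt_14 {m : ℕ} (hm : 1 ≤ m) (M N : Finset (Fin m))
    (hMN : 1 ≤ M.card + N.card) (hMNu : ¬ (M = Finset.univ ∧ N = Finset.univ))
    (Ds : Finset ((Fin m → ZMod 2) × (Fin m → ZMod 2)))
    (hDs : Ds = (deltaC M ×ˢ deltaC N)ᶜ) :
    Ds.card = 2 ^ (2 * m) - 2 ^ (M.card + N.card) ∧
    ((Finset.univ : Finset ((Fin m → ZMod 2) × (Fin m → ZMod 2))).image (cwR Ds)).card = 2 ^ m ∧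
    (Finset.univ : Finset ((Fin m → ZMod 2) × (Fin m → ZMod 2))).val.map (fun v => hammingNorm (gcwR Ds v)) =
      Multiset.replicate (2 ^ m * (2 ^ (m - (M ∪ N).card) - 1))
          (2 ^ (2 * m)) +
      Multiset.replicate (2 ^ m * (2 ^ (m - N.card) - 2 ^ (m - (M ∪ N).card)))
          (2 ^ (2 * m) - 2 ^ (M.card + N.card - 1)) +
      Multiset.replicate (2 ^ m * (2 ^ m - 2 ^ (m - N.card)))
          (2 ^ (2 * m) - 2 ^ (M.card + N.card)) +
      Multiset.replicate (2 ^ m)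
          (0) := by
  classical
  subst hDs
  refine ⟨?_, ?_, ?_⟩
  · rw [Finset.card_compl, prod_card]
    congr 1
    have := univ_pairs_card (m := m)
    rwa [Finset.card_univ] at this
  · have himg : (Finset.univ : Finset ((Fin m → ZMod 2) × (Fin m → ZMod 2))).image
        (cwR ((deltaC M ×ˢ deltaC N)ᶜ)) =
        (Finset.univ : Finset (Fin m → ZMod 2)).image
        (fun α => cwR ((deltaC M ×ˢ deltaC N)ᶜ) (α, 0)) := by
      ext x
      simp only [Finset.mem_image, Finset.mem_univ, true_and]
      constructor
      · rintro ⟨v, rfl⟩; exact ⟨v.1, rfl⟩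
      · rintro ⟨a, rfl⟩; exact ⟨(a, 0), rfl⟩
    rw [himg, Finset.card_image_of_injective _ (cwR_inj M N hMNu _ rfl), Finset.card_univ]
    simp
  · set s := (Finset.univ : Finset ((Fin m → ZMod 2) × (Fin m → ZMod 2))).val with hs
    have a1 := Multiset.filter_add_not (fun v : (Fin m → ZMod 2) × (Fin m → ZMod 2) =>
      ∀ j ∈ N, v.1 j = 0) s
    have a2 : Multiset.filter (fun v : (Fin m → ZMod 2) × (Fin m → ZMod 2) =>
        ∀ j ∈ N, v.1 j = 0) s =
        Multiset.filter (fun v => ∀ j ∈ M ∪ N, v.1 j = 0) s +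
        Multiset.filter (fun v => (¬ ∀ j ∈ M ∪ N, v.1 j = 0) ∧ ∀ j ∈ N, v.1 j = 0) s := by
      have t := Multiset.filter_add_not (fun v : (Fin m → ZMod 2) × (Fin m → ZMod 2) =>
        ∀ j ∈ M ∪ N, v.1 j = 0)
        (Multiset.filter (fun v => ∀ j ∈ N, v.1 j = 0) s)
      rw [Multiset.filter_filter, Multiset.filter_filter] at t
      rw [← t]
      congr 1
      apply Multiset.filter_congr
      intro x _
      constructor
      · exact fun h => h.1
      · exact fun h => ⟨h, fun j hj => h j (Finset.mem_union_right _ hj)⟩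
    have a3 : Multiset.filter (fun v : (Fin m → ZMod 2) × (Fin m → ZMod 2) =>
        ∀ j ∈ M ∪ N, v.1 j = 0) s =
        Multiset.filter (fun v => v.1 = 0) s +
        Multiset.filter (fun v => (¬ v.1 = 0) ∧ ∀ j ∈ M ∪ N, v.1 j = 0) s := by
      have t := Multiset.filter_add_not (fun v : (Fin m → ZMod 2) × (Fin m → ZMod 2) =>
        v.1 = 0)
        (Multiset.filter (fun v => ∀ j ∈ M ∪ N, v.1 j = 0) s)
      rw [Multiset.filter_filter, Multiset.filter_filter] at t
      rw [← t]
      congr 1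
      apply Multiset.filter_congr
      intro x _
      constructor
      · exact fun h => h.1
      · intro h; exact ⟨h, fun j _ => by rw [h]; rfl⟩
    -- replicate conversions
    have r0 : (Multiset.filter (fun v : (Fin m → ZMod 2) × (Fin m → ZMod 2) => v.1 = 0) s).map
        (fun v => hammingNorm (gcwR ((deltaC M ×ˢ deltaC N)ᶜ) v)) =
        Multiset.replicate (2 ^ m) 0 := by
      rw [map_filter_const _ _ _ 0 (fun x _ hx => wt0 _ x hx)]
      congr 1
      have h1 := card_fst_filter (m := m) (P := fun α => α = 0)
      rw [acount0, one_mul] at h1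
      rw [hs, mfilter_card, h1]
    have r1 : (Multiset.filter (fun v : (Fin m → ZMod 2) × (Fin m → ZMod 2) =>
        (¬ v.1 = 0) ∧ ∀ j ∈ M ∪ N, v.1 j = 0) s).map
        (fun v => hammingNorm (gcwR ((deltaC M ×ˢ deltaC N)ᶜ) v)) =
        Multiset.replicate (2 ^ m * (2 ^ (m - (M ∪ N).card) - 1)) (2 ^ (2 * m)) := by
      rw [map_filter_const _ _ _ (2 ^ (2 * m)) ?_]
      · congr 1
        have h1 := card_fst_filter (m := m) (P := fun α => (¬ α = 0) ∧ ∀ j ∈ M ∪ N, α j = 0)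
        rw [acount1] at h1
        rw [hs, mfilter_card, h1, mul_comm]
      · intro x _ hx
        obtain ⟨i, hi⟩ := Function.ne_iff.mp hx.1
        exact wt1 M N x hx.2 hi
    have r2 : (Multiset.filter (fun v : (Fin m → ZMod 2) × (Fin m → ZMod 2) =>
        (¬ ∀ j ∈ M ∪ N, v.1 j = 0) ∧ ∀ j ∈ N, v.1 j = 0) s).map
        (fun v => hammingNorm (gcwR ((deltaC M ×ˢ deltaC N)ᶜ) v)) =
        Multiset.replicate (2 ^ m * (2 ^ (m - N.card) - 2 ^ (m - (M ∪ N).card)))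
          (2 ^ (2 * m) - 2 ^ (M.card + N.card - 1)) := by
      rw [map_filter_const _ _ _ (2 ^ (2 * m) - 2 ^ (M.card + N.card - 1)) ?_]
      · congr 1
        have h1 := card_fst_filter (m := m)
          (P := fun α => (¬ ∀ j ∈ M ∪ N, α j = 0) ∧ ∀ j ∈ N, α j = 0)
        rw [acount2] at h1
        rw [hs, mfilter_card, h1, mul_comm]
      · intro x _ hx
        push_neg at hx
        obtain ⟨⟨j, hjU, hj⟩, hN0⟩ := hx
        have hjM : j ∈ M := by
          rcases Finset.mem_union.mp hjU with h | h
          · exact h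
          · exact absurd (hN0 j h) hj
        exact wt2 M N hMN x hN0 hjM hj
    have r3 : (Multiset.filter (fun v : (Fin m → ZMod 2) × (Fin m → ZMod 2) =>
        ¬ ∀ j ∈ N, v.1 j = 0) s).map
        (fun v => hammingNorm (gcwR ((deltaC M ×ˢ deltaC N)ᶜ) v)) =
        Multiset.replicate (2 ^ m * (2 ^ m - 2 ^ (m - N.card)))
          (2 ^ (2 * m) - 2 ^ (M.card + N.card)) := by
      rw [map_filter_const _ _ _ (2 ^ (2 * m) - 2 ^ (M.card + N.card)) ?_]
      · congr 1
        have h1 := card_fst_filter (m := m) (P := fun α => ¬ ∀ j ∈ N, α j = 0)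
        rw [acount3] at h1
        rw [hs, mfilter_card, h1, mul_comm]
      · intro x _ hx
        push_neg at hx
        obtain ⟨j, hjN, hj⟩ := hx
        exact wt3 M N x hjN hj
    calc s.map (fun v => hammingNorm (gcwR ((deltaC M ×ˢ deltaC N)ᶜ) v))
        = (Multiset.filter (fun v => ∀ j ∈ N, v.1 j = 0) s
            + Multiset.filter (fun v => ¬ ∀ j ∈ N, v.1 j = 0) s).map
            (fun v => hammingNorm (gcwR ((deltaC M ×ˢ deltaC N)ᶜ) v)) := by rw [a1]
      _ = _ := by
          rw [Multiset.map_add, a2, Multiset.map_add, a3, Multiset.map_add, r0, r1, r2, r3]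
          abel
end

section
/- Let m ≥ 1, let M, N ⊆ [m] with M ⊊ [m] and ∅ ≠ N ⊊ [m], and let D = aΔ_M^c + cΔ_N^c ⊆ E^m. Then the binary Gray image Φ(C^R_D) is an F₂-linear code of length 2(2^m−2^{|M|})(2^m−2^{|N|}), with 2^m codewords (F₂-dimension m), minimum distance (2^m−2^{|M|})(2^m−2^{|N|}), and every nonzero codeword has Hamming weight in {(2^m−2^{|M|})(2^m−2^{|N|−1}), 2^m(2^m−2^{|M|})−2^{m+|N|−1}, (2^m−2^{|M|})(2^m−2^{|N|})}. Moreover, Φ(C^R_D) is a minimal code, and if |M|+|N| ≥ 3 then Φ(C^R_D) is self-orthogonal. -/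
open Finset

/-!
Only `α = v.1` matters: at `d = (t₁, t₂)` the Gray image of `c^R_D(v)` is
`(t₂·α, t₁·α + t₂·α)`. Translating by a unit vector `e_i` with `i ∈ K` and `α i ≠ 0` swaps the
two level sets of `t ↦ t·α` on `Δ_K`, so `t·α = 1` on exactly half of `Δ_K` if `α` does not
vanish on `K`, and nowhere otherwise. Passing to complements gives the numbers `a`, `b` of ones
of `t ↦ t·α` on `Δ_M^c`, `Δ_N^c`, and the weight of the codeword is
`2|Δ_M^c| b + a |Δ_N^c| - 2ab`; this yields the three weights and, as `2b ≥ |Δ_N^c|`, the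
minimum distance.

Every `u ∈ 𝔽₂^m` is `t₂` or `t₁ + t₂` for some `(t₁, t₂) ∈ D`, so `v ↦ u·α` is a coordinate of
the code; this gives injectivity in `α` and minimality. Modulo 2, the inner product of two
codewords is `|Δ_N^c| Σ (t₁·α)(t₁·β)` plus products of sums `Σ_{t ∈ Δ_K^c} t·γ`, and these
vanish as soon as `|K| ≠ 1`.
-/

open Matrix

namespace GrayCode

variable {m : ℕ}

lemma mem_deltaC {K : Finset (Fin m)} {t : Fin m → ZMod 2} :
    t ∈ deltaC K ↔ ∀ i, t i ≠ 0 → i ∈ K := by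
  simp [deltaC]

lemma deltaC_univ : deltaC (univ : Finset (Fin m)) = univ := by
  simp [deltaC]

lemma card_deltaC (K : Finset (Fin m)) : #(deltaC K) = 2 ^ #K := by
  have : deltaC K = Fintype.piFinset fun i => if i ∈ K then univ else {0} := by
    ext t
    simp only [mem_deltaC, Fintype.mem_piFinset]
    refine forall_congr' fun i => ?_
    by_cases hi : i ∈ K <;> simp [hi]
  simp [this, apply_ite, prod_ite_mem]

lemma card_compl_deltaC (K : Finset (Fin m)) : #(deltaC K)ᶜ = 2 ^ m - 2 ^ #K := by
  simp [card_compl, card_deltaC]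

lemma two_pow_card_le (K : Finset (Fin m)) : 2 ^ #K ≤ 2 ^ m :=
  Nat.pow_le_pow_right two_pos (by simpa using card_le_univ K)

lemma add_mem_deltaC {K : Finset (Fin m)} {s t : Fin m → ZMod 2} (hs : s ∈ deltaC K)
    (ht : t ∈ deltaC K) : s + t ∈ deltaC K := by
  rw [mem_deltaC] at *
  intro i hi
  by_cases hsi : s i = 0
  · exact ht i (by simpa [hsi] using hi)
  · exact hs i hsi

lemma single_mem_deltaC_iff {K : Finset (Fin m)} {i : Fin m} :
    Pi.single i (1 : ZMod 2) ∈ deltaC K ↔ i ∈ K := by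
  rw [mem_deltaC]
  refine ⟨fun h => h i (by simp), fun hi j hj => ?_⟩
  obtain rfl : j = i := by by_contra h; simp [h] at hj
  exact hi

def numDotOne (S : Finset (Fin m → ZMod 2)) (α : Fin m → ZMod 2) : ℕ :=
  ∑ t ∈ S, (t ⬝ᵥ α).val

lemma numDotOne_le_card (S : Finset (Fin m → ZMod 2)) (α : Fin m → ZMod 2) :
    numDotOne S α ≤ #S := by
  simpa [numDotOne] using sum_le_card_nsmul S (fun t => (t ⬝ᵥ α).val) 1 fun t _ =>
    Nat.le_of_lt_succ (ZMod.val_lt (t ⬝ᵥ α))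

lemma two_mul_numDotOne_of_add_mem {S : Finset (Fin m → ZMod 2)} {α e : Fin m → ZMod 2}
    (he : e ⬝ᵥ α = 1) (hS : ∀ t ∈ S, t + e ∈ S) : 2 * numDotOne S α = #S := by
  have hinv (t : Fin m → ZMod 2) : t + e + e = t := by
    ext j
    simp only [Pi.add_apply, add_assoc, CharTwo.add_self_eq_zero, add_zero]
  have htranslate : ∑ t ∈ S, ((t + e) ⬝ᵥ α).val = numDotOne S α :=
    sum_nbij' (· + e) (· + e) hS hS (fun t _ => hinv t) (fun t _ => hinv t) fun _ _ => rfl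
  have hpair (x : ZMod 2) : x.val + (x + 1).val = 1 := by revert x; decide
  calc 2 * numDotOne S α = numDotOne S α + ∑ t ∈ S, ((t + e) ⬝ᵥ α).val := by
        rw [htranslate, two_mul]
    _ = #S := by simp [numDotOne, ← sum_add_distrib, add_dotProduct, he, hpair]

lemma numDotOne_deltaC_of_forall {K : Finset (Fin m)} {α : Fin m → ZMod 2}
    (h : ∀ i ∈ K, α i = 0) : numDotOne (deltaC K) α = 0 := by
  refine sum_eq_zero fun t ht => ?_
  suffices t ⬝ᵥ α = 0 by simp [this]
  refine sum_eq_zero fun i _ => ?_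
  by_cases hti : t i = 0
  · simp [hti]
  · simp [h i (mem_deltaC.1 ht i hti)]

lemma two_mul_numDotOne_deltaC_of_exists {K : Finset (Fin m)} {α : Fin m → ZMod 2}
    (h : ∃ i ∈ K, α i ≠ 0) : 2 * numDotOne (deltaC K) α = 2 ^ #K := by
  obtain ⟨i, hiK, hαi⟩ := h
  rw [← card_deltaC]
  refine two_mul_numDotOne_of_add_mem (e := Pi.single i 1) ?_
    fun t ht => add_mem_deltaC ht (single_mem_deltaC_iff.2 hiK)
  rw [single_dotProduct, one_mul]
  revert hαi; generalize α i = x; revert x; decide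

lemma two_mul_numDotOne_univ {α : Fin m → ZMod 2} (hα : α ≠ 0) :
    2 * numDotOne univ α = 2 ^ m := by
  obtain ⟨i, hi⟩ := Function.ne_iff.1 hα
  simpa [deltaC_univ] using two_mul_numDotOne_deltaC_of_exists (K := univ) ⟨i, mem_univ i, hi⟩

lemma numDotOne_compl_add (K : Finset (Fin m)) (α : Fin m → ZMod 2) :
    numDotOne (deltaC K)ᶜ α + numDotOne (deltaC K) α = numDotOne univ α :=
  sum_compl_add_sum _ _

lemma two_mul_numDotOne_compl_deltaC_of_exists {K : Finset (Fin m)} {α : Fin m → ZMod 2}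
    (h : ∃ i ∈ K, α i ≠ 0) : 2 * numDotOne (deltaC K)ᶜ α + 2 ^ #K = 2 ^ m := by
  have hα : α ≠ 0 := by
    obtain ⟨i, -, hi⟩ := h
    exact fun h0 => hi (by simp [h0])
  have := numDotOne_compl_add K α
  have := two_mul_numDotOne_deltaC_of_exists h
  have := two_mul_numDotOne_univ hα
  omega

lemma two_mul_numDotOne_compl_deltaC_of_forall {K : Finset (Fin m)} {α : Fin m → ZMod 2}
    (hα : α ≠ 0) (h : ∀ i ∈ K, α i = 0) : 2 * numDotOne (deltaC K)ᶜ α = 2 ^ m := by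
  rw [← two_mul_numDotOne_univ hα, ← numDotOne_compl_add, numDotOne_deltaC_of_forall h, add_zero]

lemma hammingNorm_eq_sum_val {ι : Type*} [Fintype ι] (f : ι → ZMod 2) :
    hammingNorm f = ∑ i, (f i).val := by
  rw [hammingNorm, card_filter]
  refine sum_congr rfl fun i _ => ?_
  generalize f i = x
  revert x; decide

lemma sum_coords_prod {R : Type*} [AddCommMonoid R] (D₁ D₂ : Finset (Fin m → ZMod 2))
    (g : (Fin m → ZMod 2) × (Fin m → ZMod 2) → Fin 2 → R) :
    ∑ x : {d // d ∈ D₁ ×ˢ D₂} × Fin 2, g x.1.1 x.2 =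
      ∑ t₁ ∈ D₁, ∑ t₂ ∈ D₂, (g (t₁, t₂) 0 + g (t₁, t₂) 1) := by
  rw [Fintype.sum_prod_type, ← sum_product (f := fun d => g d 0 + g d 1)]
  simp only [Fin.sum_univ_two]
  exact sum_coe_sort (D₁ ×ˢ D₂) fun d => g d 0 + g d 1

lemma gcwR_apply (Ds : Finset ((Fin m → ZMod 2) × (Fin m → ZMod 2)))
    (v : (Fin m → ZMod 2) × (Fin m → ZMod 2)) (x : {d // d ∈ Ds} × Fin 2) :
    gcwR Ds v x = grayPair (x.1.1.1 ⬝ᵥ v.1, x.1.1.2 ⬝ᵥ v.1) x.2 := rfl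

@[simp] lemma grayPair_zero (e : ZMod 2 × ZMod 2) : grayPair e 0 = e.2 := rfl

@[simp] lemma grayPair_one (e : ZMod 2 × ZMod 2) : grayPair e 1 = e.1 + e.2 := rfl

lemma hammingNorm_gcwR_prod_add (D₁ D₂ : Finset (Fin m → ZMod 2))
    (v : (Fin m → ZMod 2) × (Fin m → ZMod 2)) :
    hammingNorm (gcwR (D₁ ×ˢ D₂) v) + 2 * (numDotOne D₁ v.1 * numDotOne D₂ v.1) =
      2 * (#D₁ * numDotOne D₂ v.1) + numDotOne D₁ v.1 * #D₂ := by
  have hpair (x y : ZMod 2) : y.val + (x + y).val + 2 * (x.val * y.val) = 2 * y.val + x.val := by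
    revert x y; decide
  have hweight : hammingNorm (gcwR (D₁ ×ˢ D₂) v) =
      ∑ t₁ ∈ D₁, ∑ t₂ ∈ D₂, ((t₂ ⬝ᵥ v.1).val + (t₁ ⬝ᵥ v.1 + t₂ ⬝ᵥ v.1).val) := by
    rw [hammingNorm_eq_sum_val]
    exact sum_coords_prod D₁ D₂ fun d j => (grayPair (d.1 ⬝ᵥ v.1, d.2 ⬝ᵥ v.1) j).val
  calc hammingNorm (gcwR (D₁ ×ˢ D₂) v) + 2 * (numDotOne D₁ v.1 * numDotOne D₂ v.1)
      = ∑ t₁ ∈ D₁, ∑ t₂ ∈ D₂, ((t₂ ⬝ᵥ v.1).val + (t₁ ⬝ᵥ v.1 + t₂ ⬝ᵥ v.1).val +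
          2 * ((t₁ ⬝ᵥ v.1).val * (t₂ ⬝ᵥ v.1).val)) := by
        rw [hweight, numDotOne, numDotOne, sum_mul_sum, mul_sum, ← sum_add_distrib]
        refine sum_congr rfl fun t₁ _ => ?_
        rw [mul_sum, ← sum_add_distrib]
    _ = ∑ t₁ ∈ D₁, ∑ t₂ ∈ D₂, (2 * (t₂ ⬝ᵥ v.1).val + (t₁ ⬝ᵥ v.1).val) := by
        simp only [hpair]
    _ = 2 * (#D₁ * numDotOne D₂ v.1) + numDotOne D₁ v.1 * #D₂ := by
        simp only [numDotOne, sum_add_distrib, ← mul_sum, sum_const, smul_eq_mul]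
        ring

section Weights

variable {M N : Finset (Fin m)} {v : (Fin m → ZMod 2) × (Fin m → ZMod 2)}

lemma hammingNorm_gcwR_of_exists_mem (hN : ∃ i ∈ N, v.1 i ≠ 0) :
    hammingNorm (gcwR ((deltaC M)ᶜ ×ˢ (deltaC N)ᶜ) v) = (2 ^ m - 2 ^ #M) * (2 ^ m - 2 ^ #N) := by
  have hw := hammingNorm_gcwR_prod_add (deltaC M)ᶜ (deltaC N)ᶜ v
  have hb := two_mul_numDotOne_compl_deltaC_of_exists hN
  have hd₂ : 2 ^ m - 2 ^ #N = 2 * numDotOne (deltaC N)ᶜ v.1 := by omega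
  rw [card_compl_deltaC, card_compl_deltaC, hd₂] at hw
  rw [hd₂]
  linarith

lemma hammingNorm_gcwR_of_forall_of_exists (hN₀ : N.Nonempty) (hN : ∀ i ∈ N, v.1 i = 0)
    (hM : ∃ i ∈ M, v.1 i ≠ 0) :
    hammingNorm (gcwR ((deltaC M)ᶜ ×ˢ (deltaC N)ᶜ) v) =
      (2 ^ m - 2 ^ #M) * (2 ^ m - 2 ^ (#N - 1)) := by
  have hα : v.1 ≠ 0 := by
    obtain ⟨i, -, hi⟩ := hM
    exact fun h0 => hi (by simp [h0])
  have hw := hammingNorm_gcwR_prod_add (deltaC M)ᶜ (deltaC N)ᶜ v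
  have ha := two_mul_numDotOne_compl_deltaC_of_exists hM
  have hb := two_mul_numDotOne_compl_deltaC_of_forall hα hN
  have hNpow : 2 ^ #N = 2 * 2 ^ (#N - 1) := by
    rw [← pow_succ']; congr; have := hN₀.card_pos; omega
  have hMle := two_pow_card_le M
  have hNle := two_pow_card_le N
  rw [card_compl_deltaC, card_compl_deltaC, hNpow] at hw
  rw [hNpow] at hNle
  qify [hMle, hNle, show 2 ^ (#N - 1) ≤ 2 ^ m by omega] at hw ha hb ⊢
  have ha' : (numDotOne (deltaC M)ᶜ v.1 : ℚ) = (2 ^ m - 2 ^ #M) / 2 := by linarith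
  have hb' : (numDotOne (deltaC N)ᶜ v.1 : ℚ) = 2 ^ m / 2 := by linarith
  rw [ha', hb'] at hw
  linarith

lemma hammingNorm_gcwR_of_forall_of_forall (hα : v.1 ≠ 0) (hN₀ : N.Nonempty)
    (hN : ∀ i ∈ N, v.1 i = 0) (hM : ∀ i ∈ M, v.1 i = 0) :
    hammingNorm (gcwR ((deltaC M)ᶜ ×ˢ (deltaC N)ᶜ) v) =
      2 ^ m * (2 ^ m - 2 ^ #M) - 2 ^ (m + #N - 1) := by
  have hw := hammingNorm_gcwR_prod_add (deltaC M)ᶜ (deltaC N)ᶜ v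
  have ha := two_mul_numDotOne_compl_deltaC_of_forall hα hM
  have hb := two_mul_numDotOne_compl_deltaC_of_forall hα hN
  have hNpow : 2 ^ #N = 2 * 2 ^ (#N - 1) := by
    rw [← pow_succ']; congr; have := hN₀.card_pos; omega
  have hpow : 2 ^ (m + #N - 1) = 2 ^ m * 2 ^ (#N - 1) := by
    rw [← pow_add]; congr 1; have := hN₀.card_pos; omega
  have hMle := two_pow_card_le M
  have hNle := two_pow_card_le N
  rw [card_compl_deltaC, card_compl_deltaC, hNpow] at hw
  rw [hNpow] at hNle
  suffices hadd : hammingNorm (gcwR ((deltaC M)ᶜ ×ˢ (deltaC N)ᶜ) v) + 2 ^ (m + #N - 1) =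
      2 ^ m * (2 ^ m - 2 ^ #M) by omega
  rw [hpow]
  qify [hMle, hNle] at hw ha hb ⊢
  have ha' : (numDotOne (deltaC M)ᶜ v.1 : ℚ) = 2 ^ m / 2 := by linarith
  have hb' : (numDotOne (deltaC N)ᶜ v.1 : ℚ) = 2 ^ m / 2 := by linarith
  rw [ha', hb'] at hw
  linarith

lemma le_hammingNorm_gcwR (hα : v.1 ≠ 0) :
    (2 ^ m - 2 ^ #M) * (2 ^ m - 2 ^ #N) ≤ hammingNorm (gcwR ((deltaC M)ᶜ ×ˢ (deltaC N)ᶜ) v) := by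
  have hw := hammingNorm_gcwR_prod_add (deltaC M)ᶜ (deltaC N)ᶜ v
  have ha := numDotOne_le_card (deltaC M)ᶜ v.1
  have hb : #(deltaC N)ᶜ ≤ 2 * numDotOne (deltaC N)ᶜ v.1 := by
    rw [card_compl_deltaC]
    by_cases hN : ∃ i ∈ N, v.1 i ≠ 0
    · have := two_mul_numDotOne_compl_deltaC_of_exists hN
      omega
    · push Not at hN
      rw [two_mul_numDotOne_compl_deltaC_of_forall hα hN]
      exact Nat.sub_le _ _
  obtain ⟨c, hc⟩ := Nat.exists_eq_add_of_le ha
  rw [← card_compl_deltaC, ← card_compl_deltaC, hc]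
  rw [hc] at hw
  nlinarith [Nat.mul_le_mul_left c hb]

end Weights

lemma gcwR_congr_fst (Ds : Finset ((Fin m → ZMod 2) × (Fin m → ZMod 2)))
    {v w : (Fin m → ZMod 2) × (Fin m → ZMod 2)} (h : v.1 = w.1) : gcwR Ds v = gcwR Ds w := by
  funext x
  simp [gcwR_apply, h]

lemma gcwR_add (Ds : Finset ((Fin m → ZMod 2) × (Fin m → ZMod 2)))
    (v w : (Fin m → ZMod 2) × (Fin m → ZMod 2)) : gcwR Ds (v + w) = gcwR Ds v + gcwR Ds w := by
  funext ⟨d, j⟩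
  fin_cases j <;> simp [gcwR_apply, dotProduct_add, add_add_add_comm]

lemma gcwR_zero (Ds : Finset ((Fin m → ZMod 2) × (Fin m → ZMod 2))) : gcwR Ds 0 = 0 := by
  funext ⟨d, j⟩
  fin_cases j <;> simp [gcwR_apply]

section Coordinates

variable {M N : Finset (Fin m)}

lemma exists_coord_eq_dotProduct (hM : M ≠ univ) (hN : N ≠ univ) (u : Fin m → ZMod 2) :
    ∃ x : {d // d ∈ (deltaC M)ᶜ ×ˢ (deltaC N)ᶜ} × Fin 2,
      ∀ v, gcwR ((deltaC M)ᶜ ×ˢ (deltaC N)ᶜ) v x = u ⬝ᵥ v.1 := by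
  obtain ⟨j, hj⟩ : ∃ j, j ∉ M := by simpa [eq_univ_iff_forall] using hM
  obtain ⟨k, hk⟩ : ∃ k, k ∉ N := by simpa [eq_univ_iff_forall] using hN
  by_cases hu : u ∈ deltaC N
  · set t : Fin m → ZMod 2 := fun i => if i = j ∨ i = k then 1 else 0
    have ht : t ∉ deltaC M := fun h => hj (mem_deltaC.1 h j (by simp [t]))
    have huk : u k = 0 := by_contra fun h => hk (mem_deltaC.1 hu k h)
    have hut : u + t ∉ deltaC N := fun h => hk (mem_deltaC.1 h k (by simp [t, huk]))
    refine ⟨(⟨(t, u + t), mem_product.2 ⟨mem_compl.2 ht, mem_compl.2 hut⟩⟩, 1), fun v => ?_⟩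
    simp only [gcwR_apply, grayPair_one, add_dotProduct]
    rw [add_left_comm, CharTwo.add_self_eq_zero, add_zero]
  · have hj' : Pi.single j 1 ∉ deltaC M := mt single_mem_deltaC_iff.1 hj
    exact ⟨(⟨(Pi.single j 1, u), mem_product.2 ⟨mem_compl.2 hj', mem_compl.2 hu⟩⟩, 0),
      fun v => rfl⟩

lemma gcwR_eq_gcwR_iff (hM : M ≠ univ) (hN : N ≠ univ)
    {v w : (Fin m → ZMod 2) × (Fin m → ZMod 2)} :
    gcwR ((deltaC M)ᶜ ×ˢ (deltaC N)ᶜ) v = gcwR ((deltaC M)ᶜ ×ˢ (deltaC N)ᶜ) w ↔ v.1 = w.1 := by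
  refine ⟨fun h => funext fun i => ?_, gcwR_congr_fst _⟩
  obtain ⟨x, hx⟩ := exists_coord_eq_dotProduct hM hN (Pi.single i 1)
  simpa [hx] using congrFun h x

lemma gcwR_eq_zero_iff (hM : M ≠ univ) (hN : N ≠ univ) {v : (Fin m → ZMod 2) × (Fin m → ZMod 2)} :
    gcwR ((deltaC M)ᶜ ×ˢ (deltaC N)ᶜ) v = 0 ↔ v.1 = 0 := by
  rw [← gcwR_zero, gcwR_eq_gcwR_iff hM hN]
  rfl

lemma card_image_gcwR (hM : M ≠ univ) (hN : N ≠ univ) :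
    #(univ.image (gcwR ((deltaC M)ᶜ ×ˢ (deltaC N)ᶜ))) = 2 ^ m := by
  have himage : univ.image (gcwR ((deltaC M)ᶜ ×ˢ (deltaC N)ᶜ)) =
      univ.image fun α => gcwR ((deltaC M)ᶜ ×ˢ (deltaC N)ᶜ) (α, 0) := by
    ext y
    simp only [mem_image, mem_univ, true_and]
    exact ⟨fun ⟨v, hv⟩ => ⟨v.1, gcwR_congr_fst _ rfl |>.trans hv⟩, fun ⟨α, hα⟩ => ⟨_, hα⟩⟩
  rw [himage, card_image_of_injective _ fun α β h => (gcwR_eq_gcwR_iff hM hN).1 h]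
  simp

lemma eq_of_forall_dotProduct_ne_zero {α β : Fin m → ZMod 2} (hβ : β ≠ 0)
    (h : ∀ u, u ⬝ᵥ β ≠ 0 → u ⬝ᵥ α ≠ 0) : α = β := by
  have hsingle (i : Fin m) : β i ≠ 0 → α i ≠ 0 := by
    simpa [single_dotProduct] using h (Pi.single i 1)
  obtain ⟨i, hi⟩ := Function.ne_iff.1 hβ
  funext j
  by_cases hj : β j = 0
  · have hsum := h (Pi.single i 1 + Pi.single j 1) (by simpa [add_dotProduct, hj] using hi)
    simp only [add_dotProduct, single_dotProduct, one_mul] at hsum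
    have hαi := hsingle i hi
    rw [hj]
    revert hsum hαi
    generalize α i = x; generalize α j = y
    revert x y; decide
  · have hαj := hsingle j hj
    revert hj hαj
    generalize α j = x; generalize β j = y
    revert x y; decide

lemma gcwR_eq_of_support_subset (hM : M ≠ univ) (hN : N ≠ univ)
    {v w : (Fin m → ZMod 2) × (Fin m → ZMod 2)} (hw : gcwR ((deltaC M)ᶜ ×ˢ (deltaC N)ᶜ) w ≠ 0)
    (hsupp : ∀ x, gcwR ((deltaC M)ᶜ ×ˢ (deltaC N)ᶜ) w x ≠ 0 →
      gcwR ((deltaC M)ᶜ ×ˢ (deltaC N)ᶜ) v x ≠ 0) :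
    gcwR ((deltaC M)ᶜ ×ˢ (deltaC N)ᶜ) w = gcwR ((deltaC M)ᶜ ×ˢ (deltaC N)ᶜ) v := by
  rw [gcwR_eq_gcwR_iff hM hN]
  refine (eq_of_forall_dotProduct_ne_zero (mt (gcwR_eq_zero_iff hM hN).2 hw) fun u hu => ?_).symm
  obtain ⟨x, hx⟩ := exists_coord_eq_dotProduct hM hN u
  simpa only [hx] using hsupp x (by rwa [hx])

end Coordinates

lemma sum_gcwR_mul_gcwR_prod (D₁ D₂ : Finset (Fin m → ZMod 2))
    (v w : (Fin m → ZMod 2) × (Fin m → ZMod 2)) :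
    ∑ x, gcwR (D₁ ×ˢ D₂) v x * gcwR (D₁ ×ˢ D₂) w x =
      (#D₂ : ZMod 2) * ∑ t ∈ D₁, (t ⬝ᵥ v.1) * (t ⬝ᵥ w.1) +
        (∑ t ∈ D₁, t ⬝ᵥ v.1) * (∑ t ∈ D₂, t ⬝ᵥ w.1) +
        (∑ t ∈ D₂, t ⬝ᵥ v.1) * (∑ t ∈ D₁, t ⬝ᵥ w.1) := by
  have hpair (x y x' y' : ZMod 2) :
      y * y' + (x + y) * (x' + y') = x * x' + x * y' + y * x' := by
    revert x y x' y'; decide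
  calc ∑ x, gcwR (D₁ ×ˢ D₂) v x * gcwR (D₁ ×ˢ D₂) w x
      = ∑ t₁ ∈ D₁, ∑ t₂ ∈ D₂, ((t₂ ⬝ᵥ v.1) * (t₂ ⬝ᵥ w.1) +
          (t₁ ⬝ᵥ v.1 + t₂ ⬝ᵥ v.1) * (t₁ ⬝ᵥ w.1 + t₂ ⬝ᵥ w.1)) :=
        sum_coords_prod D₁ D₂ fun d j =>
          grayPair (d.1 ⬝ᵥ v.1, d.2 ⬝ᵥ v.1) j * grayPair (d.1 ⬝ᵥ w.1, d.2 ⬝ᵥ w.1) j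
    _ = ∑ t₁ ∈ D₁, ∑ t₂ ∈ D₂, ((t₁ ⬝ᵥ v.1) * (t₁ ⬝ᵥ w.1) + (t₁ ⬝ᵥ v.1) * (t₂ ⬝ᵥ w.1) +
          (t₂ ⬝ᵥ v.1) * (t₁ ⬝ᵥ w.1)) := by
        simp only [hpair]
    _ = _ := by
        simp only [sum_add_distrib, sum_const, nsmul_eq_mul]
        rw [mul_sum, sum_mul_sum, sum_mul_sum, sum_comm (s := D₂)]

lemma sum_dotProduct_eq_natCast_numDotOne (S : Finset (Fin m → ZMod 2)) (α : Fin m → ZMod 2) :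
    ∑ t ∈ S, t ⬝ᵥ α = (numDotOne S α : ZMod 2) := by
  simp [numDotOne]

lemma sum_dotProduct_compl_deltaC_eq_zero (hm : 2 ≤ m) {K : Finset (Fin m)} (hK : #K ≠ 1)
    (γ : Fin m → ZMod 2) : ∑ t ∈ (deltaC K)ᶜ, t ⬝ᵥ γ = 0 := by
  rw [sum_dotProduct_eq_natCast_numDotOne, ZMod.natCast_eq_zero_iff]
  have h4m : 2 ^ m = 4 * 2 ^ (m - 2) := by
    rw [show (4 : ℕ) = 2 ^ 2 by rfl, ← pow_add]; congr 1; omega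
  by_cases hγK : ∃ i ∈ K, γ i ≠ 0
  · have h := two_mul_numDotOne_compl_deltaC_of_exists hγK
    obtain ⟨i, hi, -⟩ := hγK
    have h4K : 2 ^ #K = 4 * 2 ^ (#K - 2) := by
      have := card_pos.2 ⟨i, hi⟩
      rw [show (4 : ℕ) = 2 ^ 2 by rfl, ← pow_add]; congr 1; omega
    omega
  · push Not at hγK
    by_cases hγ : γ = 0
    · simp [hγ, numDotOne]
    · have h := two_mul_numDotOne_compl_deltaC_of_forall hγ hγK
      omega

lemma sum_gcwR_mul_gcwR_eq_zero {M N : Finset (Fin m)} (hm : 2 ≤ m) (hN : N.Nonempty)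
    (hMN : 3 ≤ #M + #N) (v w : (Fin m → ZMod 2) × (Fin m → ZMod 2)) :
    ∑ x, gcwR ((deltaC M)ᶜ ×ˢ (deltaC N)ᶜ) v x * gcwR ((deltaC M)ᶜ ×ˢ (deltaC N)ᶜ) w x = 0 := by
  have hD₂ : (#(deltaC N)ᶜ : ZMod 2) = 0 := by
    rw [card_compl_deltaC, ZMod.natCast_eq_zero_iff]
    exact Nat.dvd_sub (dvd_pow_self 2 (by omega)) (dvd_pow_self 2 hN.card_pos.ne')
  rw [sum_gcwR_mul_gcwR_prod, hD₂, zero_mul, zero_add]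
  rcases (show #N ≠ 1 ∨ #M ≠ 1 by omega) with hN₁ | hM₁
  · simp [sum_dotProduct_compl_deltaC_eq_zero hm hN₁]
  · simp [sum_dotProduct_compl_deltaC_eq_zero hm hM₁]

end GrayCode

open GrayCode in
theorem stmt_18_general {m : ℕ} (M N : Finset (Fin m))
    (hMu : M ≠ Finset.univ) (hN : N ≠ ∅) (hNu : N ≠ Finset.univ)
    (Ds : Finset ((Fin m → ZMod 2) × (Fin m → ZMod 2)))
    (hDs : Ds = (deltaC M)ᶜ ×ˢ (deltaC N)ᶜ) :
    (2 * Ds.card = 2 * ((2 ^ m - 2 ^ M.card) * (2 ^ m - 2 ^ N.card))) ∧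
    ((Finset.univ : Finset ((Fin m → ZMod 2) × (Fin m → ZMod 2))).image (gcwR Ds)).card = 2 ^ m ∧
    (∀ v w : (Fin m → ZMod 2) × (Fin m → ZMod 2), ∃ z : (Fin m → ZMod 2) × (Fin m → ZMod 2), gcwR Ds z = gcwR Ds v + gcwR Ds w) ∧
    (∀ v : (Fin m → ZMod 2) × (Fin m → ZMod 2), gcwR Ds v ≠ 0 → (2 ^ m - 2 ^ M.card) * (2 ^ m - 2 ^ N.card) ≤ hammingNorm (gcwR Ds v)) ∧
    (∃ v : (Fin m → ZMod 2) × (Fin m → ZMod 2), gcwR Ds v ≠ 0 ∧ hammingNorm (gcwR Ds v) = (2 ^ m - 2 ^ M.card) * (2 ^ m - 2 ^ N.card)) ∧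
    (∀ v : (Fin m → ZMod 2) × (Fin m → ZMod 2), gcwR Ds v ≠ 0 →
        hammingNorm (gcwR Ds v) = (2 ^ m - 2 ^ M.card) * (2 ^ m - 2 ^ (N.card - 1)) ∨
        hammingNorm (gcwR Ds v) = 2 ^ m * (2 ^ m - 2 ^ M.card) - 2 ^ (m + N.card - 1) ∨
        hammingNorm (gcwR Ds v) = (2 ^ m - 2 ^ M.card) * (2 ^ m - 2 ^ N.card)) ∧
    (∀ v w : (Fin m → ZMod 2) × (Fin m → ZMod 2), gcwR Ds v ≠ 0 → gcwR Ds w ≠ 0 →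
      (∀ i, gcwR Ds w i ≠ 0 → gcwR Ds v i ≠ 0) → gcwR Ds w = gcwR Ds v) ∧
    (3 ≤ M.card + N.card →
      ∀ v w : (Fin m → ZMod 2) × (Fin m → ZMod 2), ∑ i, gcwR Ds v i * gcwR Ds w i = 0) := by
  subst hDs
  have hN₀ : N.Nonempty := nonempty_iff_ne_empty.2 hN
  have hm : 2 ≤ m := by
    have := card_lt_card (ssubset_univ_iff.2 hNu)
    simp only [card_univ, Fintype.card_fin] at this
    have := hN₀.card_pos
    omega
  have hne (v : (Fin m → ZMod 2) × (Fin m → ZMod 2)) := (gcwR_eq_zero_iff hMu hNu (v := v)).not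
  refine ⟨by rw [card_product, card_compl_deltaC, card_compl_deltaC], card_image_gcwR hMu hNu,
    fun v w => ⟨v + w, gcwR_add _ v w⟩, fun v hv => le_hammingNorm_gcwR ((hne v).1 hv), ?_, ?_,
    fun v w _ hw hsupp => gcwR_eq_of_support_subset hMu hNu hw hsupp,
    fun h3 v w => sum_gcwR_mul_gcwR_eq_zero hm hN₀ h3 v w⟩
  · obtain ⟨i, hi⟩ := hN₀
    have hαi : (Pi.single i 1 : Fin m → ZMod 2) i ≠ 0 := by simp
    exact ⟨(Pi.single i 1, 0), (hne _).2 (Function.ne_iff.2 ⟨i, hαi⟩),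
      hammingNorm_gcwR_of_exists_mem ⟨i, hi, hαi⟩⟩
  · intro v hv
    by_cases hαN : ∃ i ∈ N, v.1 i ≠ 0
    · exact Or.inr (Or.inr (hammingNorm_gcwR_of_exists_mem hαN))
    push Not at hαN
    by_cases hαM : ∃ i ∈ M, v.1 i ≠ 0
    · exact Or.inl (hammingNorm_gcwR_of_forall_of_exists hN₀ hαN hαM)
    push Not at hαM
    exact Or.inr (Or.inl (hammingNorm_gcwR_of_forall_of_forall ((hne v).1 hv) hN₀ hαN hαM))

theorem stmt_18 {m : ℕ} (hm : 1 ≤ m) (M N : Finset (Fin m))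
    (hMu : M ≠ Finset.univ) (hN : N ≠ ∅) (hNu : N ≠ Finset.univ)
    (Ds : Finset ((Fin m → ZMod 2) × (Fin m → ZMod 2)))
    (hDs : Ds = (deltaC M)ᶜ ×ˢ (deltaC N)ᶜ) :
    (2 * Ds.card = 2 * ((2 ^ m - 2 ^ M.card) * (2 ^ m - 2 ^ N.card))) ∧
    ((Finset.univ : Finset ((Fin m → ZMod 2) × (Fin m → ZMod 2))).image (gcwR Ds)).card = 2 ^ m ∧
    (∀ v w : (Fin m → ZMod 2) × (Fin m → ZMod 2), ∃ z : (Fin m → ZMod 2) × (Fin m → ZMod 2), gcwR Ds z = gcwR Ds v + gcwR Ds w) ∧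
    (∀ v : (Fin m → ZMod 2) × (Fin m → ZMod 2), gcwR Ds v ≠ 0 → (2 ^ m - 2 ^ M.card) * (2 ^ m - 2 ^ N.card) ≤ hammingNorm (gcwR Ds v)) ∧
    (∃ v : (Fin m → ZMod 2) × (Fin m → ZMod 2), gcwR Ds v ≠ 0 ∧ hammingNorm (gcwR Ds v) = (2 ^ m - 2 ^ M.card) * (2 ^ m - 2 ^ N.card)) ∧
    (∀ v : (Fin m → ZMod 2) × (Fin m → ZMod 2), gcwR Ds v ≠ 0 →
        hammingNorm (gcwR Ds v) = (2 ^ m - 2 ^ M.card) * (2 ^ m - 2 ^ (N.card - 1)) ∨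
        hammingNorm (gcwR Ds v) = 2 ^ m * (2 ^ m - 2 ^ M.card) - 2 ^ (m + N.card - 1) ∨
        hammingNorm (gcwR Ds v) = (2 ^ m - 2 ^ M.card) * (2 ^ m - 2 ^ N.card)) ∧
    (∀ v w : (Fin m → ZMod 2) × (Fin m → ZMod 2), gcwR Ds v ≠ 0 → gcwR Ds w ≠ 0 →
      (∀ i, gcwR Ds w i ≠ 0 → gcwR Ds v i ≠ 0) → gcwR Ds w = gcwR Ds v) ∧
    (3 ≤ M.card + N.card →
      ∀ v w : (Fin m → ZMod 2) × (Fin m → ZMod 2), ∑ i, gcwR Ds v i * gcwR Ds w i = 0) :=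
  stmt_18_general M N hMu hN hNu Ds hDs
end
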